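/- Multiplication by (1 + X_i) in the quotient ring R_n = 𝔽₂[X_1, …, X_n]/⟨X_1², …, X_n²⟩ realizes the partial Möbius operator: for every f : 𝔽₂ⁿ → 𝔽₂ and every index i, the image in R_n of the polynomial P_{μ_i(f)} equals the image of P_f multiplied by the image of (1 + X_i). -/
import Mathlib


/-- The partial Möbius operator `μ_i`. -/
def partialMobius {n : ℕ} (i : Fin n) (f : (Fin n → ZMod 2) → ZMod 2) :
    (Fin n → ZMod 2) → ZMod 2 :=
  fun u => if u i = 0 then f u else f (Function.update u i 0) + f u

/-- The multilinear polynomial form `P_f = ∑_u f(u) X^u` of a Boolean function. -/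
noncomputable def polyForm {n : ℕ} (f : (Fin n → ZMod 2) → ZMod 2) :
    MvPolynomial (Fin n) (ZMod 2) :=
  ∑ u : Fin n → ZMod 2,
    MvPolynomial.C (f u) * ∏ i ∈ Finset.univ.filter (fun i => u i = 1), MvPolynomial.X i

/-- The ideal `⟨X_1², …, X_n²⟩`. -/
noncomputable def sqIdeal (n : ℕ) : Ideal (MvPolynomial (Fin n) (ZMod 2)) :=
  Ideal.span (Set.range fun i : Fin n => (MvPolynomial.X i) ^ 2)

open MvPolynomial Finset

noncomputable def monom {n : ℕ} (u : Fin n → ZMod 2) : MvPolynomial (Fin n) (ZMod 2) :=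
  ∏ j ∈ Finset.univ.filter (fun j => u j = 1), MvPolynomial.X j

lemma zmod2_cases : ∀ x : ZMod 2, x = 0 ∨ x = 1 := by decide

lemma monom_update {n : ℕ} (u : Fin n → ZMod 2) (i : Fin n) (h : u i = 0) :
    monom (Function.update u i 1) = MvPolynomial.X i * monom u := by
  unfold monom
  have hfil : Finset.univ.filter (fun j => Function.update u i 1 j = 1)
      = insert i (Finset.univ.filter (fun j => u j = 1)) := by
    ext j
    simp only [mem_filter, mem_univ, true_and, mem_insert, Function.update_apply]
    by_cases hj : j = i
    · subst hj; simp
    · simp [hj]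
  have hni : i ∉ Finset.univ.filter (fun j => u j = 1) := by
    simp [h]
  rw [hfil, Finset.prod_insert hni]

lemma monom_split {n : ℕ} (u : Fin n → ZMod 2) (i : Fin n) (h : u i = 1) :
    monom u = MvPolynomial.X i * monom (Function.update u i 0) := by
  have h0 : Function.update u i 0 i = 0 := by simp
  have := monom_update (Function.update u i 0) i h0
  rw [Function.update_idem] at this
  rw [show Function.update u i (1:ZMod 2) = u from by rw [← h]; exact Function.update_eq_self i u] at this
  exact this

lemma q_sq_zero {n : ℕ} (i : Fin n) (p : MvPolynomial (Fin n) (ZMod 2)) :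
    Ideal.Quotient.mk (sqIdeal n) (MvPolynomial.X i * MvPolynomial.X i * p) = 0 := by
  rw [Ideal.Quotient.eq_zero_iff_mem]
  apply Ideal.mul_mem_right
  rw [← sq]
  exact Ideal.subset_span ⟨i, rfl⟩

/-- in `R_n = 𝔽₂[X_1,…,X_n]/⟨X_i²⟩`, the image of `P_{μ_i(f)}` equals the
image of `P_f` multiplied by the image of `1 + X_i`. -/
theorem polyForm_partialMobius {n : ℕ} (f : (Fin n → ZMod 2) → ZMod 2) (i : Fin n) :
    Ideal.Quotient.mk (sqIdeal n) (polyForm (partialMobius i f)) =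
      Ideal.Quotient.mk (sqIdeal n) (polyForm f) *
        Ideal.Quotient.mk (sqIdeal n) (1 + MvPolynomial.X i) := by
  set q := Ideal.Quotient.mk (sqIdeal n) with hqdef
  have hPf : ∀ g : (Fin n → ZMod 2) → ZMod 2,
      polyForm g = ∑ u : Fin n → ZMod 2, MvPolynomial.C (g u) * monom u := by
    intro g; rfl
  rw [← map_mul, mul_add, mul_one, map_add]
  -- RHS second term
  have hbij : ∑ u ∈ Finset.univ.filter (fun u : Fin n → ZMod 2 => u i = 0),
        q (MvPolynomial.C (f u) * monom (Function.update u i 1))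
      = ∑ u ∈ Finset.univ.filter (fun u : Fin n → ZMod 2 => u i = 1),
        q (MvPolynomial.C (f (Function.update u i 0)) * monom u) := by
    apply Finset.sum_nbij' (fun u => Function.update u i 1) (fun u => Function.update u i 0)
    · intro u hu; simp
    · intro u hu; simp
    · intro u hu
      simp only [mem_filter, mem_univ, true_and] at hu
      rw [Function.update_idem, ← hu, Function.update_eq_self]
    · intro u hu
      simp only [mem_filter, mem_univ, true_and] at hu
      rw [Function.update_idem, ← hu, Function.update_eq_self]
    · intro u hu
      simp only [mem_filter, mem_univ, true_and] at hu
      rw [Function.update_idem, ← hu, Function.update_eq_self]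
  have hX : q (polyForm f * MvPolynomial.X i)
      = ∑ u ∈ Finset.univ.filter (fun u : Fin n → ZMod 2 => u i = 1),
        q (MvPolynomial.C (f (Function.update u i 0)) * monom u) := by
    rw [hPf, Finset.sum_mul, map_sum]
    rw [← Finset.sum_filter_add_sum_filter_not Finset.univ (fun u : Fin n → ZMod 2 => u i = 0)]
    have hz : ∑ u ∈ Finset.univ.filter (fun u : Fin n → ZMod 2 => ¬ u i = 0),
        q (MvPolynomial.C (f u) * monom u * MvPolynomial.X i) = 0 := by
      apply Finset.sum_eq_zero
      intro u hu
      simp only [mem_filter, mem_univ, true_and] at hu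
      have h1 : u i = 1 := (zmod2_cases (u i)).resolve_left hu
      rw [monom_split u i h1]
      rw [show MvPolynomial.C (f u) * (MvPolynomial.X i * monom (Function.update u i 0)) * MvPolynomial.X i
          = MvPolynomial.X i * MvPolynomial.X i * (MvPolynomial.C (f u) * monom (Function.update u i 0)) from by ring]
      exact q_sq_zero i _
    rw [hz, add_zero, ← hbij]
    apply Finset.sum_congr rfl
    intro u hu
    simp only [mem_filter, mem_univ, true_and] at hu
    rw [monom_update u i hu]
    ring_nf
  -- LHS
  have hL : q (polyForm (partialMobius i f))
      = q (polyForm f) + ∑ u ∈ Finset.univ.filter (fun u : Fin n → ZMod 2 => u i = 1),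
        q (MvPolynomial.C (f (Function.update u i 0)) * monom u) := by
    rw [hPf, hPf, map_sum, map_sum]
    rw [← Finset.sum_filter_add_sum_filter_not Finset.univ (fun u : Fin n → ZMod 2 => u i = 0)
      (fun u => q (MvPolynomial.C (partialMobius i f u) * monom u))]
    rw [← Finset.sum_filter_add_sum_filter_not Finset.univ (fun u : Fin n → ZMod 2 => u i = 0)
      (fun u => q (MvPolynomial.C (f u) * monom u))]
    have h0 : ∑ u ∈ Finset.univ.filter (fun u : Fin n → ZMod 2 => u i = 0),
        q (MvPolynomial.C (partialMobius i f u) * monom u)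
        = ∑ u ∈ Finset.univ.filter (fun u : Fin n → ZMod 2 => u i = 0),
        q (MvPolynomial.C (f u) * monom u) := by
      apply Finset.sum_congr rfl
      intro u hu
      simp only [mem_filter, mem_univ, true_and] at hu
      simp [partialMobius, hu]
    have h1 : ∑ u ∈ Finset.univ.filter (fun u : Fin n → ZMod 2 => ¬ u i = 0),
        q (MvPolynomial.C (partialMobius i f u) * monom u)
        = ∑ u ∈ Finset.univ.filter (fun u : Fin n → ZMod 2 => ¬ u i = 0),
        q (MvPolynomial.C (f u) * monom u)
        + ∑ u ∈ Finset.univ.filter (fun u : Fin n → ZMod 2 => u i = 1),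
        q (MvPolynomial.C (f (Function.update u i 0)) * monom u) := by
      have hset : Finset.univ.filter (fun u : Fin n → ZMod 2 => ¬ u i = 0)
          = Finset.univ.filter (fun u : Fin n → ZMod 2 => u i = 1) := by
        apply Finset.filter_congr
        intro u _
        constructor
        · intro h; exact (zmod2_cases (u i)).resolve_left h
        · intro h; rw [h]; decide
      rw [hset, ← Finset.sum_add_distrib]
      apply Finset.sum_congr rfl
      intro u hu
      simp only [mem_filter, mem_univ, true_and] at hu
      have : partialMobius i f u = f (Function.update u i 0) + f u := by
        simp [partialMobius, hu]
      rw [this, map_add, add_mul, map_add, add_comm]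
    rw [h0, h1]
    ring
  rw [hL, hX]
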